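/- Let T have numerical range in the sector S_α. Then for all x, y ∈ ℂ^n there exists a unitary U (independent of x, y) with |⟨Tx, y⟩| ≤ (sec α / 2)(|⟨(Re T)^{1/2} U (Re T)^{1/2} x, y⟩| + √(⟨(Re T)y, y⟩ ⟨(Re T)x, x⟩)). -/

import Mathlib

open Matrix
open scoped ComplexOrder

/-- The open sector `S_α`. -/
def sector (α : ℝ) : Set ℂ := {z : ℂ | 0 < z.re ∧ |z.im| ≤ Real.tan α * z.re}

/-- `A ∈ Π_n^α`: the numerical range of `A` lies in the sector `S_α`. -/
def IsSectorial {n : ℕ} (α : ℝ) (A : Matrix (Fin n) (Fin n) ℂ) : Prop :=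
  ∀ x : Fin n → ℂ, star x ⬝ᵥ x = 1 → star x ⬝ᵥ A.mulVec x ∈ sector α

/-- The real part `Re X = (X + X*) / 2` of a matrix. -/
noncomputable def reM {n : ℕ} (X : Matrix (Fin n) (Fin n) ℂ) : Matrix (Fin n) (Fin n) ℂ :=
  (1 / 2 : ℂ) • (X + Xᴴ)

/-- The positive semidefinite square root of a positive semidefinite matrix
(the Mathlib definition of December 2024, removed since). -/
noncomputable def Matrix.PosSemidef.sqrt {n𝕜 : Type*} {𝕜 : Type*} [Fintype n𝕜] [RCLike 𝕜]
    [DecidableEq n𝕜] {A : Matrix n𝕜 n𝕜 𝕜} (hA : A.PosSemidef) : Matrix n𝕜 n𝕜 𝕜 :=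
  hA.1.eigenvectorUnitary.1 * diagonal ((↑) ∘ (Real.sqrt ∘ hA.1.eigenvalues)) *
    (star hA.1.eigenvectorUnitary : Matrix n𝕜 n𝕜 𝕜)

lemma psd_sqrt_herm {n : ℕ} {A : Matrix (Fin n) (Fin n) ℂ} (hA : A.PosSemidef) :
    hA.sqrt.IsHermitian := by
  unfold Matrix.PosSemidef.sqrt
  rw [Matrix.IsHermitian, conjTranspose_mul, conjTranspose_mul, diagonal_conjTranspose,
    Matrix.star_eq_conjTranspose, conjTranspose_conjTranspose, ← Matrix.mul_assoc]
  congr 3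
  ext i
  simp

lemma psd_sqrt_mul_self {n : ℕ} {A : Matrix (Fin n) (Fin n) ℂ} (hA : A.PosSemidef) :
    hA.sqrt * hA.sqrt = A := by
  unfold Matrix.PosSemidef.sqrt
  conv_rhs => rw [hA.1.spectral_theorem, Unitary.conjStarAlgAut_apply]
  have hu : (star hA.1.eigenvectorUnitary : Matrix (Fin n) (Fin n) ℂ) * hA.1.eigenvectorUnitary.1 = 1 :=
    Unitary.coe_star_mul_self _
  calc _ = (hA.1.eigenvectorUnitary.1 * diagonal ((↑) ∘ (Real.sqrt ∘ hA.1.eigenvalues))) *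
      ((star hA.1.eigenvectorUnitary : Matrix (Fin n) (Fin n) ℂ) * hA.1.eigenvectorUnitary.1) *
      (diagonal ((↑) ∘ (Real.sqrt ∘ hA.1.eigenvalues)) *
      (star hA.1.eigenvectorUnitary : Matrix (Fin n) (Fin n) ℂ)) := by simp only [Matrix.mul_assoc]; rfl
    _ = _ := by
      rw [hu, Matrix.mul_one, Matrix.mul_assoc, ← Matrix.mul_assoc (diagonal _), diagonal_mul_diagonal,
        ← Matrix.mul_assoc]
      congr 3
      ext i
      simp only [Function.comp_apply]
      rw [← Complex.ofReal_mul, Real.mul_self_sqrt (hA.eigenvalues_nonneg i)]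
      rfl

lemma dot_star_self {n : ℕ} (x : Fin n → ℂ) :
    star x ⬝ᵥ x = ((∑ i, ‖x i‖ ^ 2 : ℝ) : ℂ) := by
  simp only [dotProduct, Pi.star_apply, Complex.star_def]
  push_cast
  refine Finset.sum_congr rfl fun i _ => ?_
  rw [mul_comm, Complex.mul_conj']

lemma quad_mulVec_eq {n : ℕ} (V A : Matrix (Fin n) (Fin n) ℂ) (f e : Fin n → ℂ) :
    star (V *ᵥ f) ⬝ᵥ A *ᵥ (V *ᵥ e) = star f ⬝ᵥ (Vᴴ * A * V) *ᵥ e := by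
  rw [star_mulVec, mulVec_mulVec, dotProduct_mulVec, vecMul_vecMul, dotProduct_mulVec,
    mul_assoc]

lemma quad_conj {n : ℕ} (P A : Matrix (Fin n) (Fin n) ℂ) (x y : Fin n → ℂ) :
    star y ⬝ᵥ (P * A * Pᴴ) *ᵥ x = star (Pᴴ *ᵥ y) ⬝ᵥ A *ᵥ (Pᴴ *ᵥ x) := by
  rw [quad_mulVec_eq, conjTranspose_conjTranspose]

lemma conjT_quad {n : ℕ} (A : Matrix (Fin n) (Fin n) ℂ) (x : Fin n → ℂ) :
    star x ⬝ᵥ Aᴴ *ᵥ x = star (star x ⬝ᵥ A *ᵥ x) := by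
  rw [star_dotProduct, star_mulVec, conjTranspose_conjTranspose, dotProduct_mulVec]

lemma reM_quad {n : ℕ} (A : Matrix (Fin n) (Fin n) ℂ) (x : Fin n → ℂ) :
    star x ⬝ᵥ (reM A) *ᵥ x = (((star x ⬝ᵥ A *ᵥ x).re : ℝ) : ℂ) := by
  rw [reM, smul_mulVec, add_mulVec, dotProduct_smul, dotProduct_add, conjT_quad,
    smul_eq_mul]
  rw [Complex.star_def, Complex.add_conj]
  push_cast
  ring

lemma sector_ne {n : ℕ} {α : ℝ} {A : Matrix (Fin n) (Fin n) ℂ} (hA : IsSectorial α A)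
    {x : Fin n → ℂ} (hx : x ≠ 0) :
    0 < (star x ⬝ᵥ A *ᵥ x).re ∧
      |(star x ⬝ᵥ A *ᵥ x).im| ≤ Real.tan α * (star x ⬝ᵥ A *ᵥ x).re := by
  set t : ℝ := ∑ i, ‖x i‖ ^ 2 with ht
  have htpos : 0 < t := by
    obtain ⟨i, hi⟩ := Function.ne_iff.mp hx
    have hxi : x i ≠ 0 := hi
    refine Finset.sum_pos' (fun j _ => by positivity) ⟨i, Finset.mem_univ i, ?_⟩
    have : 0 < ‖x i‖ := norm_pos_iff.mpr hxi
    positivity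
  set c : ℂ := (((Real.sqrt t)⁻¹ : ℝ) : ℂ) with hc
  set u : Fin n → ℂ := c • x with hu
  have hcc : star c * c = ((t⁻¹ : ℝ) : ℂ) := by
    rw [hc, Complex.star_def, Complex.conj_ofReal]
    norm_cast
    rw [← mul_inv, Real.mul_self_sqrt htpos.le]
  have hunit : star u ⬝ᵥ u = 1 := by
    rw [hu, star_smul, smul_dotProduct, dotProduct_smul, dot_star_self, ← ht, smul_eq_mul,
      smul_eq_mul, ← mul_assoc, hcc]
    norm_cast
    rw [inv_mul_cancel₀ htpos.ne']
  have hq : star u ⬝ᵥ A *ᵥ u = ((t⁻¹ : ℝ) : ℂ) * (star x ⬝ᵥ A *ᵥ x) := by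
    rw [hu, star_smul, smul_dotProduct, mulVec_smul, dotProduct_smul, smul_eq_mul, smul_eq_mul,
      ← mul_assoc, hcc]
  obtain ⟨h1, h2⟩ := hA u hunit
  rw [hq] at h1 h2
  simp only [Complex.mul_re, Complex.mul_im, Complex.ofReal_re, Complex.ofReal_im, zero_mul,
    sub_zero, zero_add, add_zero] at h1 h2
  have hti : 0 < t⁻¹ := by positivity
  rw [abs_mul, abs_of_pos hti] at h2
  constructor
  · nlinarith
  · calc |(star x ⬝ᵥ A *ᵥ x).im| = t * (t⁻¹ * |(star x ⬝ᵥ A *ᵥ x).im|) := by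
          field_simp
      _ ≤ t * (Real.tan α * (t⁻¹ * (star x ⬝ᵥ A *ᵥ x).re)) :=
          mul_le_mul_of_nonneg_left h2 htpos.le
      _ = Real.tan α * (star x ⬝ᵥ A *ᵥ x).re := by
          field_simp

theorem sectorial_inner_bound {n : ℕ} (α : ℝ) (hα0 : 0 ≤ α) (hα : α < Real.pi / 2)
    (T : Matrix (Fin n) (Fin n) ℂ) (hT : IsSectorial α T) (hR : (reM T).PosSemidef) :
    ∃ U : Matrix (Fin n) (Fin n) ℂ, U ∈ Matrix.unitaryGroup (Fin n) ℂ ∧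
      ∀ x y : Fin n → ℂ,
        ‖star y ⬝ᵥ T.mulVec x‖ ≤
          (Real.cos α)⁻¹ / 2 *
            (‖star y ⬝ᵥ (hR.sqrt * U * hR.sqrt).mulVec x‖ +
              Real.sqrt ((star y ⬝ᵥ (reM T).mulVec y).re * (star x ⬝ᵥ (reM T).mulVec x).re)) := by
  classical
  have hcos : 0 < Real.cos α := Real.cos_pos_of_mem_Ioo ⟨by linarith [Real.pi_pos], hα⟩
  set c : ℝ := (Real.cos α)⁻¹ / 2 with hcdef
  have hc2 : 2 * c = (Real.cos α)⁻¹ := by rw [hcdef]; ring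
  have hcpos : 0 < c := by rw [hcdef]; positivity
  set R : Matrix (Fin n) (Fin n) ℂ := reM T with hRdef
  -- R is positive definite
  have hRpd : R.PosDef := by
    refine Matrix.PosDef.of_dotProduct_mulVec_pos hR.1 fun x hx => ?_
    rw [hRdef, reM_quad]
    exact_mod_cast Complex.zero_lt_real.mpr (sector_ne hT hx).1
  set Q : Matrix (Fin n) (Fin n) ℂ := hR.sqrt with hQdef
  have hQher : Q.IsHermitian := psd_sqrt_herm hR
  have hQQ : Q * Q = R := psd_sqrt_mul_self hR
  have hQdet : IsUnit Q.det := by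
    have h1 : IsUnit R.det := (Matrix.isUnit_iff_isUnit_det R).mp hRpd.isUnit
    have h2 : Q.det * Q.det = R.det := by rw [← det_mul, hQQ]
    exact isUnit_of_mul_isUnit_left (h2.symm ▸ h1)
  have hQiQ : Q⁻¹ * Q = 1 := nonsing_inv_mul Q hQdet
  have hQQi : Q * Q⁻¹ = 1 := mul_nonsing_inv Q hQdet
  have hQiher : Q⁻¹.IsHermitian := by
    rw [Matrix.IsHermitian, conjTranspose_nonsing_inv, hQher.eq]
  set M : Matrix (Fin n) (Fin n) ℂ := Q⁻¹ * T * Q⁻¹ with hMdef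
  have hMH : Mᴴ = Q⁻¹ * Tᴴ * Q⁻¹ := by
    rw [hMdef, conjTranspose_mul, conjTranspose_mul, hQiher.eq, mul_assoc]
  have hMre : (1 / 2 : ℂ) • (M + Mᴴ) = 1 := by
    have : M + Mᴴ = Q⁻¹ * (T + Tᴴ) * Q⁻¹ := by
      rw [hMdef, hMH, mul_add, add_mul]
    rw [this, ← smul_mul_assoc, ← mul_smul_comm, ← reM, ← hRdef, ← hQQ]
    calc Q⁻¹ * (Q * Q) * Q⁻¹ = (Q⁻¹ * Q) * (Q * Q⁻¹) := by rw [← mul_assoc, mul_assoc]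
      _ = 1 := by rw [hQiQ, hQQi, one_mul]
  set S : Matrix (Fin n) (Fin n) ℂ := (-(Complex.I) / 2) • (M - Mᴴ) with hSdef
  have hSher : S.IsHermitian := by
    rw [Matrix.IsHermitian, hSdef, conjTranspose_smul, conjTranspose_sub,
      conjTranspose_conjTranspose]
    have : star (-(Complex.I) / 2) = Complex.I / 2 := by
      simp [Complex.star_def]
    rw [this]
    module
  have hM1 : M = 1 + Complex.I • S := by
    rw [hSdef, ← hMre, smul_smul]
    have : Complex.I * (-(Complex.I) / 2) = 1 / 2 := by
      norm_num [Complex.ext_iff, Complex.mul_re, Complex.mul_im]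
    rw [this]
    module
  -- spectral theorem for S
  set V : Matrix (Fin n) (Fin n) ℂ := (hSher.eigenvectorUnitary : Matrix (Fin n) (Fin n) ℂ)
    with hVdef
  set μ : Fin n → ℝ := hSher.eigenvalues with hmudef
  have hVsV : Vᴴ * V = 1 := by
    rw [← Matrix.star_eq_conjTranspose]
    exact mem_unitaryGroup_iff'.mp hSher.eigenvectorUnitary.2
  have hVVs : V * Vᴴ = 1 := by
    rw [← Matrix.star_eq_conjTranspose]
    exact mem_unitaryGroup_iff.mp hSher.eigenvectorUnitary.2
  have hdiagS : Vᴴ * S * V = diagonal (fun j => (μ j : ℂ)) := by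
    rw [← Matrix.star_eq_conjTranspose]
    have := hSher.conjStarAlgAut_star_eigenvectorUnitary
    rw [Unitary.conjStarAlgAut_star_apply] at this
    exact this
  -- eigenvalue bound
  have hmu : ∀ j, |μ j| ≤ Real.tan α := by
    intro j
    set e : Fin n → ℂ := Pi.single j 1 with hedef
    set v : Fin n → ℂ := V *ᵥ e with hvdef
    have hee : star e ⬝ᵥ e = 1 := by
      simp [hedef, dotProduct, Pi.single_apply, apply_ite]
    have hv1 : star v ⬝ᵥ v = 1 := by
      have := quad_mulVec_eq V 1 e e
      rw [Matrix.mul_one, hVsV, one_mulVec, one_mulVec] at this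
      rw [hvdef, this, hee]
    have hvS : star v ⬝ᵥ S *ᵥ v = ((μ j : ℝ) : ℂ) := by
      rw [hvdef, quad_mulVec_eq, hdiagS]
      simp [hedef, dotProduct, mulVec_diagonal, Pi.single_apply, apply_ite]
    have hv0 : v ≠ 0 := by
      intro h
      rw [h] at hv1
      simp [dotProduct] at hv1
    set z : Fin n → ℂ := Q⁻¹ *ᵥ v with hzdef
    have hz0 : z ≠ 0 := by
      intro h
      have : Q *ᵥ z = v := by
        rw [hzdef, mulVec_mulVec, hQQi, one_mulVec]
      rw [h, mulVec_zero] at this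
      exact hv0 this.symm
    have hqz : star z ⬝ᵥ T *ᵥ z = 1 + Complex.I * ((μ j : ℝ) : ℂ) := by
      rw [hzdef, quad_mulVec_eq, hQiher.eq, ← hMdef, hM1, add_mulVec, one_mulVec,
        dotProduct_add, hv1, smul_mulVec, dotProduct_smul, hvS, smul_eq_mul]
    obtain ⟨h1, h2⟩ := sector_ne hT hz0
    rw [hqz] at h1 h2
    simp only [Complex.add_re, Complex.add_im, Complex.one_re, Complex.one_im, Complex.mul_re,
      Complex.mul_im, Complex.I_re, Complex.I_im, Complex.ofReal_re, Complex.ofReal_im] at h1 h2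
    norm_num at h2
    exact h2
  -- the unitary factor
  set ν : Fin n → ℂ := fun j => 1 + Complex.I * ((μ j : ℝ) : ℂ) with hnudef
  set r : Fin n → ℝ := fun j => ‖ν j‖ with hrdef
  have hr1 : ∀ j, 1 ≤ r j := by
    intro j
    have : |(ν j).re| ≤ ‖ν j‖ := Complex.abs_re_le_norm (ν j)
    have hre : (ν j).re = 1 := by
      simp [hnudef]
    rw [hre] at this
    simpa using this
  have hr0 : ∀ j, 0 < r j := fun j => lt_of_lt_of_le one_pos (hr1 j)
  have hrsq : ∀ j, r j ^ 2 = 1 + μ j ^ 2 := by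
    intro j
    have : r j ^ 2 = Complex.normSq (ν j) := by
      rw [hrdef]
      simp only [Complex.sq_norm]
    rw [this, Complex.normSq_apply]
    simp [hnudef]
    ring
  have hrle : ∀ j, r j ≤ (Real.cos α)⁻¹ := by
    intro j
    have h1 : r j = Real.sqrt (1 + μ j ^ 2) := by
      rw [← hrsq j, Real.sqrt_sq (hr0 j).le]
    have h2 : Real.sqrt (1 + Real.tan α ^ 2) = (Real.cos α)⁻¹ := by
      rw [← Real.inv_sqrt_one_add_tan_sq hcos, inv_inv]
    rw [h1, ← h2]
    apply Real.sqrt_le_sqrt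
    have := hmu j
    nlinarith [abs_nonneg (μ j), sq_abs (μ j), Real.tan_nonneg_of_nonneg_of_le_pi_div_two hα0 hα.le]
  set u : Fin n → ℂ := fun j => ((r j : ℝ) : ℂ)⁻¹ * ν j with hudef
  have hnu_eq : ∀ j, ν j = ((r j : ℝ) : ℂ) * u j := by
    intro j
    rw [hudef, ← mul_assoc, mul_inv_cancel₀ (by exact_mod_cast (hr0 j).ne'), one_mul]
  have hu_norm : ∀ j, ‖u j‖ = 1 := by
    intro j
    rw [hudef]
    simp only [norm_mul, norm_inv, Complex.norm_real, Real.norm_eq_abs,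
      abs_of_pos (hr0 j), ← hrdef]
    rw [inv_mul_cancel₀ (hr0 j).ne']
  have hu_conj : ∀ j, star (u j) * u j = 1 := by
    intro j
    rw [mul_comm, Complex.star_def, Complex.mul_conj', hu_norm j]
    norm_num
  clear_value u
  set U : Matrix (Fin n) (Fin n) ℂ := V * diagonal u * Vᴴ with hUdef
  have hUH : Uᴴ = V * diagonal (star u) * Vᴴ := by
    rw [hUdef, conjTranspose_mul, conjTranspose_mul, conjTranspose_conjTranspose,
      diagonal_conjTranspose]
    simp only [mul_assoc]
  have hUmem : U ∈ Matrix.unitaryGroup (Fin n) ℂ := by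
    rw [mem_unitaryGroup_iff', Matrix.star_eq_conjTranspose, hUH, hUdef]
    calc V * diagonal (star u) * Vᴴ * (V * diagonal u * Vᴴ)
        = V * (diagonal (star u) * (Vᴴ * V) * (diagonal u * Vᴴ)) := by
          simp only [mul_assoc]
      _ = V * (diagonal (star u) * (diagonal u * Vᴴ)) := by rw [hVsV, Matrix.mul_one]
      _ = V * ((diagonal fun i => star (u i) * u i) * Vᴴ) := by
          rw [← Matrix.mul_assoc (diagonal (star u)) (diagonal u) Vᴴ, diagonal_mul_diagonal]
          simp only [Pi.star_apply]
      _ = V * (1 * Vᴴ) := by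
          rw [show (fun i => star (u i) * u i) = fun _ => (1 : ℂ) from funext fun j => hu_conj j,
            diagonal_one]
      _ = 1 := by rw [Matrix.one_mul, hVVs]
  -- the remainder diagonal
  set w : Fin n → ℂ := fun j => ν j - (c : ℂ) * u j with hwdef
  have hw : ∀ j, ‖w j‖ ≤ c := by
    intro j
    have h1 : w j = ((r j - c : ℝ) : ℂ) * u j := by
      rw [hwdef]
      show ν j - (c : ℂ) * u j = _
      rw [hnu_eq j]
      push_cast
      ring
    rw [h1, norm_mul, hu_norm j, mul_one, Complex.norm_real, Real.norm_eq_abs]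
    rw [abs_le]
    constructor
    · linarith [hr0 j]
    · linarith [hrle j]
  -- spectral form of M and the decomposition of T
  have hS_spec : S = V * diagonal (fun j => ((μ j : ℝ) : ℂ)) * Vᴴ := by
    calc S = (V * Vᴴ) * S * (V * Vᴴ) := by rw [hVVs, Matrix.one_mul, Matrix.mul_one]
      _ = V * (Vᴴ * S * V) * Vᴴ := by simp only [Matrix.mul_assoc]
      _ = V * diagonal (fun j => ((μ j : ℝ) : ℂ)) * Vᴴ := by rw [hdiagS]
  have hMspec : M = V * diagonal ν * Vᴴ := by
    have h2 : Complex.I • (V * diagonal (fun j => ((μ j : ℝ) : ℂ)) * Vᴴ)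
        = V * (Complex.I • diagonal (fun j => ((μ j : ℝ) : ℂ))) * Vᴴ := by
      rw [mul_smul_comm, smul_mul_assoc]
    have h3 : (1 : Matrix (Fin n) (Fin n) ℂ) + Complex.I • diagonal (fun j => ((μ j : ℝ) : ℂ))
        = diagonal ν := by
      ext i k
      rcases eq_or_ne i k with h | h
      · subst h
        simp [hnudef, smul_eq_mul]
      · simp [h, Matrix.one_apply_ne h, diagonal_apply_ne _ h]
    rw [hM1, hS_spec, h2, ← h3, Matrix.mul_add, Matrix.add_mul, Matrix.mul_one, hVVs]
  have hdiagw : diagonal ν = (c : ℂ) • diagonal u + diagonal w := by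
    ext i k
    rcases eq_or_ne i k with h | h
    · subst h
      have : w i = ν i - (c : ℂ) * u i := by rw [hwdef]
      simp [this, smul_eq_mul]
    · simp [h, diagonal_apply_ne _ h]
  have hT_eq : T = Q * (V * diagonal ν * Vᴴ) * Q := by
    rw [← hMspec, hMdef]
    calc T = (Q * Q⁻¹) * T * (Q⁻¹ * Q) := by rw [hQQi, hQiQ, Matrix.one_mul, Matrix.mul_one]
      _ = Q * (Q⁻¹ * T * Q⁻¹) * Q := by simp only [Matrix.mul_assoc]
  have hTsplit : T = (c : ℂ) • (Q * U * Q) + (Q * V) * diagonal w * (Q * V)ᴴ := by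
    have hQV : (Q * V)ᴴ = Vᴴ * Q := by rw [conjTranspose_mul, hQher.eq]
    rw [hQV, hT_eq, hdiagw, hUdef]
    simp only [Matrix.mul_add, Matrix.add_mul, Matrix.mul_smul, Matrix.smul_mul,
      Matrix.mul_assoc]
  -- the final estimate
  refine ⟨U, hUmem, fun x y => ?_⟩
  set P : Matrix (Fin n) (Fin n) ℂ := Q * V with hPdef
  set a : Fin n → ℂ := Pᴴ *ᵥ x with hadef
  set b : Fin n → ℂ := Pᴴ *ᵥ y with hbdef
  have hPP : P * Pᴴ = R := by
    rw [hPdef, conjTranspose_mul, hQher.eq]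
    calc Q * V * (Vᴴ * Q) = Q * (V * Vᴴ) * Q := by simp only [Matrix.mul_assoc]
      _ = R := by rw [hVVs, Matrix.mul_one, hQQ]
  have hkey : star y ⬝ᵥ T *ᵥ x
      = (c : ℂ) * (star y ⬝ᵥ (Q * U * Q) *ᵥ x) + star b ⬝ᵥ diagonal w *ᵥ a := by
    conv_lhs => rw [hTsplit]
    rw [add_mulVec, dotProduct_add, smul_mulVec, dotProduct_smul, smul_eq_mul,
      quad_conj, ← hadef, ← hbdef]
  have hnorms_a : (star x ⬝ᵥ R *ᵥ x).re = ∑ j, ‖a j‖ ^ 2 := by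
    have h1 : star x ⬝ᵥ R *ᵥ x = star a ⬝ᵥ a := by
      rw [← hPP, show P * Pᴴ = P * 1 * Pᴴ by rw [Matrix.mul_one], quad_conj, one_mulVec, hadef]
    rw [h1, dot_star_self]
    exact Complex.ofReal_re _
  have hnorms_b : (star y ⬝ᵥ R *ᵥ y).re = ∑ j, ‖b j‖ ^ 2 := by
    have h1 : star y ⬝ᵥ R *ᵥ y = star b ⬝ᵥ b := by
      rw [← hPP, show P * Pᴴ = P * 1 * Pᴴ by rw [Matrix.mul_one], quad_conj, one_mulVec, hbdef]
    rw [h1, dot_star_self]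
    exact Complex.ofReal_re _
  have hE : ‖star b ⬝ᵥ diagonal w *ᵥ a‖
      ≤ c * (Real.sqrt (∑ j, ‖b j‖ ^ 2) * Real.sqrt (∑ j, ‖a j‖ ^ 2)) := by
    have h1 : star b ⬝ᵥ diagonal w *ᵥ a = ∑ j, star (b j) * (w j * a j) := by
      simp [dotProduct, mulVec_diagonal]
    rw [h1]
    calc ‖∑ j, star (b j) * (w j * a j)‖ ≤ ∑ j, ‖star (b j) * (w j * a j)‖ :=
          norm_sum_le _ _
      _ ≤ ∑ j, c * (‖b j‖ * ‖a j‖) := by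
          refine Finset.sum_le_sum fun j _ => ?_
          rw [norm_mul, norm_mul, norm_star]
          have h2 := hw j
          nlinarith [norm_nonneg (b j), norm_nonneg (a j), norm_nonneg (w j),
            mul_nonneg (norm_nonneg (b j)) (norm_nonneg (a j))]
      _ = c * ∑ j, ‖b j‖ * ‖a j‖ := by rw [Finset.mul_sum]
      _ ≤ c * (Real.sqrt (∑ j, ‖b j‖ ^ 2) * Real.sqrt (∑ j, ‖a j‖ ^ 2)) := by
          refine mul_le_mul_of_nonneg_left ?_ hcpos.le
          exact Real.sum_mul_le_sqrt_mul_sqrt _ _ _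
  rw [hkey]
  calc ‖(c : ℂ) * (star y ⬝ᵥ (Q * U * Q) *ᵥ x) + star b ⬝ᵥ diagonal w *ᵥ a‖
      ≤ ‖(c : ℂ) * (star y ⬝ᵥ (Q * U * Q) *ᵥ x)‖ + ‖star b ⬝ᵥ diagonal w *ᵥ a‖ :=
        norm_add_le _ _
    _ ≤ c * ‖star y ⬝ᵥ (Q * U * Q) *ᵥ x‖
        + c * (Real.sqrt (∑ j, ‖b j‖ ^ 2) * Real.sqrt (∑ j, ‖a j‖ ^ 2)) := by
        rw [norm_mul, Complex.norm_real, Real.norm_eq_abs, abs_of_pos hcpos]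
        exact add_le_add le_rfl hE
    _ = c * (‖star y ⬝ᵥ (Q * U * Q) *ᵥ x‖
        + Real.sqrt ((star y ⬝ᵥ R *ᵥ y).re * (star x ⬝ᵥ R *ᵥ x).re)) := by
        rw [hnorms_a, hnorms_b, Real.sqrt_mul (by positivity)]
        ring
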